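/- Suppose that for every I ∈ K the vectors {a_i : i ∈ I} are linearly independent over ℝ (the fan is simplicial and rational). Then the group G acts almost freely on U(K): for every z ∈ U(K) the isotropy subgroup {g ∈ G : g_i z_i = z_i for all i = 1,…,m} is finite. -/

import Mathlib

/-!
If `g` fixes `z`, then `g i = 1` wherever `z i ≠ 0`, so only the coordinates in the zero set
`I ∈ K` matter. The rows `a i`, `i ∈ I`, are linearly independent, so over `ℚ` the matrix with
these rows is surjective; clearing denominators, for each `k ∈ I` some integer combination of
the columns of `a` is `d • e_k` with `d ≠ 0`. Raising the defining equations `∏ᵢ gᵢ ^ aᵢⱼ = 1`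
to the powers given by that combination yields `g k ^ d = 1`, so every coordinate of `g` is a
root of unity of bounded order.
-/

open Finset
open scoped Matrix

theorem Matrix.mulVec_surjective_of_linearIndependent_row {K m n : Type*} [Field K] [Fintype m]
    [Fintype n] {A : Matrix m n K} (h : LinearIndependent K A.row) :
    Function.Surjective A.mulVec :=
  LinearMap.range_eq_top.mp <| Submodule.eq_top_of_finrank_eq <|
    h.rank_matrix.trans (Module.finrank_fintype_fun_eq_card K).symm

theorem Matrix.exists_mulVec_eq_single_of_linearIndependent_row {R m n : Type*} [CommRing R]
    [IsDomain R] [Fintype m] [Fintype n] [DecidableEq m] {A : Matrix m n R}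
    (h : LinearIndependent R A.row) (k : m) : ∃ d ≠ 0, ∃ y : n → R, A *ᵥ y = Pi.single k d := by
  let K := FractionRing R
  have hK : LinearIndependent K fun i ↦ algebraMap R K ∘ A i :=
    linearIndependent_algebraMap_comp_iff.mpr h
  obtain ⟨x, hx⟩ :=
    Matrix.mulVec_surjective_of_linearIndependent_row (A := A.map (algebraMap R K)) hK (Pi.single k 1)
  obtain ⟨⟨d, hd⟩, hdx⟩ := IsLocalization.exist_integer_multiples_of_finite (nonZeroDivisors R) x
  choose y hy using hdx
  refine ⟨d, nonZeroDivisors.ne_zero hd, y, funext fun i ↦ IsFractionRing.injective R K ?_⟩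
  have hy' : algebraMap R K ∘ y = d • x := funext hy
  rw [RingHom.map_mulVec, hy', Matrix.mulVec_smul, hx]
  by_cases hi : i = k
  · subst hi
    simp [Algebra.smul_def]
  · simp [hi]

theorem zpow_sum₀ {ι M₀ : Type*} [CommGroupWithZero M₀] {x : M₀} (hx : x ≠ 0) (s : Finset ι)
    (c : ι → ℤ) : x ^ (∑ i ∈ s, c i) = ∏ i ∈ s, x ^ c i := by
  classical
  induction s using Finset.induction_on with
  | empty => simp
  | insert _ _ h ih => rw [sum_insert h, prod_insert h, zpow_add₀ hx, ih]

theorem prod_zpow_mulVec {ι κ M₀ : Type*} [Fintype ι] [Fintype κ] [CommGroupWithZero M₀]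
    {g : ι → M₀} (hg : ∀ i, g i ≠ 0) (A : Matrix ι κ ℤ) (y : κ → ℤ) :
    ∏ i, g i ^ (A *ᵥ y) i = ∏ j, (∏ i, g i ^ A i j) ^ y j := by
  calc ∏ i, g i ^ (A *ᵥ y) i = ∏ i, ∏ j, (g i ^ A i j) ^ y j := prod_congr rfl fun i _ ↦ by
        simp only [Matrix.mulVec, dotProduct, zpow_sum₀ (hg i), zpow_mul]
    _ = ∏ j, (∏ i, g i ^ A i j) ^ y j := by
        rw [prod_comm]
        exact prod_congr rfl fun j _ ↦ Finset.prod_zpow _ _ _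

theorem exists_zpow_eq_one_of_prod_zpow_eq_one {ι κ M₀ : Type*} [Fintype ι] [Fintype κ]
    [CommGroupWithZero M₀] (A : Matrix ι κ ℤ) {I : Set ι}
    (hI : LinearIndependent ℤ fun i : I ↦ A i) (k : ι) :
    ∃ d : ℤ, d ≠ 0 ∧ ∀ g : ι → M₀, (∀ i, g i ≠ 0) → (∀ j, ∏ i, g i ^ A i j = 1) →
      (∀ i ∉ I, g i = 1) → g k ^ d = 1 := by
  classical
  by_cases hk : k ∈ I
  · let B : Matrix I κ ℤ := fun i ↦ A i
    obtain ⟨d, hd, y, hy⟩ := B.exists_mulVec_eq_single_of_linearIndependent_row hI ⟨k, hk⟩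
    have hAy : ∀ (i) (hi : i ∈ I), (A *ᵥ y) i = (Pi.single (⟨k, hk⟩ : I) d : I → ℤ) ⟨i, hi⟩ :=
      fun i hi ↦ congrFun hy ⟨i, hi⟩
    refine ⟨d, hd, fun g hg0 hgA hgI ↦ ?_⟩
    have hfactor : ∀ i ≠ k, g i ^ (A *ᵥ y) i = 1 := fun i hik ↦ by
      by_cases hi : i ∈ I
      · rw [hAy i hi, Pi.single_eq_of_ne (by simpa using hik), zpow_zero]
      · rw [hgI i hi, one_zpow]
    calc g k ^ d = g k ^ (A *ᵥ y) k := by rw [hAy k hk, Pi.single_eq_same]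
      _ = ∏ i, g i ^ (A *ᵥ y) i := (prod_eq_single_of_mem k (mem_univ k) fun i _ ↦ hfactor i).symm
      _ = ∏ j, (∏ i, g i ^ A i j) ^ y j := prod_zpow_mulVec hg0 A y
      _ = 1 := by simp [hgA]
  · exact ⟨1, one_ne_zero, fun g _ _ hgI ↦ by simp [hgI k hk]⟩

theorem finite_setOf_zpow_eq_one {K : Type*} [Field K] {d : ℤ} (hd : d ≠ 0) :
    {x : K | x ^ d = 1}.Finite := by
  classical
  refine (Polynomial.nthRootsFinset d.natAbs (1 : K)).finite_toSet.subset fun x hx ↦ ?_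
  rw [Finset.mem_coe, Polynomial.mem_nthRootsFinset (Int.natAbs_pos.mpr hd)]
  rcases Int.natAbs_eq d with h | h <;> rw [Set.mem_ofPred_eq, h] at hx
  · exact_mod_cast hx
  · rwa [zpow_neg, zpow_natCast, inv_eq_one] at hx

theorem Set.Finite.of_forall_zpow_eq_one {ι K : Type*} [Finite ι] [Field K] {S : Set (ι → K)}
    {d : ι → ℤ} (hd : ∀ i, d i ≠ 0) (h : ∀ g ∈ S, ∀ i, g i ^ d i = 1) : S.Finite :=
  (Set.Finite.pi fun i ↦ finite_setOf_zpow_eq_one (hd i)).subset fun g hg i _ ↦ h g hg i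

theorem G_acts_almost_freely_on_UK_general (n m : ℕ)
    (a : Fin m → (Fin n → ℤ)) (K : Set (Set (Fin m)))
    (hInd : ∀ I ∈ K, LinearIndependent ℝ (fun i : I => fun j => (a i.1 j : ℝ))) :
    ∀ z : Fin m → ℂ, {i | z i = 0} ∈ K →
      Set.Finite {g : Fin m → ℂ |
        ((∀ i, g i ≠ 0) ∧ ∀ j, ∏ i, g i ^ (a i j) = 1) ∧
        ∀ i, g i * z i = z i} := by
  intro z hz
  have hI : LinearIndependent ℤ fun i : {i | z i = 0} ↦ a i :=
    linearIndependent_algebraMap_comp_iff (S := ℝ).mp (hInd _ hz)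
  choose d hd hgd using exists_zpow_eq_one_of_prod_zpow_eq_one (M₀ := ℂ) a hI
  refine Set.Finite.of_forall_zpow_eq_one hd fun g ⟨⟨hg0, hga⟩, hfix⟩ k ↦ hgd k g hg0 hga ?_
  exact fun i hi ↦ mul_right_cancel₀ hi ((hfix i).trans (one_mul _).symm)

/-- If for every `I ∈ K` the vectors `{a i : i ∈ I}` are linearly independent
over ℝ (the fan is simplicial and rational), then the group
`G = {g ∈ (ℂ^×)^m : ∏ᵢ gᵢ^{a_{ij}} = 1 for all j}` acts almost freely on `U(K)`:
all isotropy subgroups are finite. -/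
theorem G_acts_almost_freely_on_UK (n m : ℕ) (hn : 1 ≤ n) (hm : 1 ≤ m)
    (a : Fin m → (Fin n → ℤ)) (K : Set (Set (Fin m)))
    (hKempty : ∅ ∈ K) (hKdown : ∀ I ∈ K, ∀ J ⊆ I, J ∈ K)
    (hInd : ∀ I ∈ K, LinearIndependent ℝ (fun i : I => fun j => (a i.1 j : ℝ))) :
    ∀ z : Fin m → ℂ, {i | z i = 0} ∈ K →
      Set.Finite {g : Fin m → ℂ |
        ((∀ i, g i ≠ 0) ∧ ∀ j, ∏ i, g i ^ (a i j) = 1) ∧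
        ∀ i, g i * z i = z i} :=
  G_acts_almost_freely_on_UK_general n m a K hInd
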